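/- arXiv:1110.6328 — 3 statements merged into one kernel-verified Lean document; each statement's English description precedes it below -/
import Mathlib

section
/- Let N ≥ 3 be an integer, t a real number, g > 0, and V : {1,…,N} → ℝ a real on-site potential. Let E_1 ≤ … ≤ E_N be the eigenvalues, listed in nondecreasing order, of the linear Hamiltonian H_0^P with periodic boundary conditions. Suppose ψ ∈ ℂ^N with ∑_{i=1}^N |ψ_i|² = 1 satisfies the stationary nonlinear Schrödinger equation t(ψ_{i+1} + ψ_{i−1}) + V_i ψ_i + g|ψ_i|²ψ_i = Eψ_i for all i with indices taken modulo N, for some real E. Then there exists n ∈ {1,…,N} with E_n ≤ E ≤ E_n + g; equivalently, E does not lie in the forbidden set Γ = (−∞,E_1) ∪ (E_1+g,E_2) ∪ … ∪ (E_{N−1}+g,E_N) ∪ (E_N+g,+∞). -/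
open Matrix Filter

noncomputable section

/-- Successor site with periodic boundary conditions (index mod `N`). -/
def pSucc {N : ℕ} (i : Fin N) : Fin N :=
  ⟨(i.1 + 1) % N, Nat.mod_lt _ (Nat.lt_of_le_of_lt (Nat.zero_le _) i.isLt)⟩

/-- Predecessor site with periodic boundary conditions (index mod `N`). -/
def pPred {N : ℕ} (i : Fin N) : Fin N :=
  ⟨(i.1 + (N - 1)) % N, Nat.mod_lt _ (Nat.lt_of_le_of_lt (Nat.zero_le _) i.isLt)⟩

/-- The linear Hamiltonian `H_0^P` with periodic boundary conditions:
`(H ψ)_i = t (ψ_{i+1} + ψ_{i-1}) + V_i ψ_i`, indices mod `N`. -/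
def periodicH (N : ℕ) (t : ℝ) (V : Fin N → ℝ) : Matrix (Fin N) (Fin N) ℂ :=
  Matrix.of fun i j =>
    (if j = pSucc i then (t : ℂ) else 0) + (if j = pPred i then (t : ℂ) else 0) +
      (if j = i then (V i : ℂ) else 0)

/-- The linear Hamiltonian `H_0^D` with Dirichlet boundary conditions
(convention `ψ_0 = ψ_{N+1} = 0`). -/
def dirichletH (N : ℕ) (t : ℝ) (V : Fin N → ℝ) : Matrix (Fin N) (Fin N) ℂ :=
  Matrix.of fun i j =>
    (if i.1 + 1 = j.1 then (t : ℂ) else 0) + (if j.1 + 1 = i.1 then (t : ℂ) else 0) +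
      (if j = i then (V i : ℂ) else 0)

/-- Sum of the neighboring values `ψ_{i+1} + ψ_{i-1}` with the Dirichlet
convention `ψ_0 = ψ_{N+1} = 0`. -/
def dNbr {N : ℕ} (ψ : Fin N → ℂ) (i : Fin N) : ℂ :=
  (if h : i.1 + 1 < N then ψ ⟨i.1 + 1, h⟩ else 0) +
    (if 0 < i.1 then ψ ⟨i.1 - 1, Nat.lt_of_le_of_lt (Nat.sub_le _ _) i.isLt⟩ else 0)

/-- The stationary nonlinear Schrödinger equation with periodic boundary conditions:
`t (ψ_{i+1} + ψ_{i-1}) + V_i ψ_i + g |ψ_i|² ψ_i = E ψ_i`, indices mod `N`. -/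
def PeriodicNLS (N : ℕ) (t g : ℝ) (V : Fin N → ℝ) (ψ : Fin N → ℂ) (E : ℝ) : Prop :=
  ∀ i : Fin N,
    (t : ℂ) * (ψ (pSucc i) + ψ (pPred i)) + (V i : ℂ) * ψ i +
        (g : ℂ) * ((‖ψ i‖ : ℂ)) ^ 2 * ψ i = (E : ℂ) * ψ i

/-- The stationary nonlinear Schrödinger equation with Dirichlet boundary conditions:
`t (ψ_{i+1} + ψ_{i-1}) + V_i ψ_i + g |ψ_i|² ψ_i = E ψ_i`, with `ψ_0 = ψ_{N+1} = 0`. -/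
def DirichletNLS (N : ℕ) (t g : ℝ) (V : Fin N → ℝ) (ψ : Fin N → ℂ) (E : ℝ) : Prop :=
  ∀ i : Fin N,
    (t : ℂ) * dNbr ψ i + (V i : ℂ) * ψ i +
        (g : ℂ) * ((‖ψ i‖ : ℂ)) ^ 2 * ψ i = (E : ℂ) * ψ i

/-- Normalization `∑ i |ψ_i|² = 1`. -/
def Normalized {N : ℕ} (ψ : Fin N → ℂ) : Prop :=
  ∑ i, ‖ψ i‖ ^ 2 = 1

/-- `e` lists the eigenvalues of the Hermitian matrix `A` in nondecreasing order,
counted with multiplicity. -/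
def IsSortedEigenvalues {N : ℕ} {A : Matrix (Fin N) (Fin N) ℂ} (hA : A.IsHermitian)
    (e : Fin N → ℝ) : Prop :=
  Monotone e ∧ ∃ σ : Equiv.Perm (Fin N), ∀ i, e i = hA.eigenvalues (σ i)

/-!
Write the nonlinear equation as `(H₀ + D) ψ = E ψ` with `D = diag (g |ψ_i|²)`; normalisation
gives `0 ≤ D ≤ g` in the Loewner order. If no eigenvalue `λ_i` of `H₀` satisfies
`λ_i ≤ E ≤ λ_i + g`, each one is either `< E - g` or `> E`. Split `ψ = u + w` along the two
corresponding spectral subspaces of `H₀`: the form of `H₀ + D - E` is negative definite on the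
first and positive definite on the second. But `(H₀ + D - E) (u + w) = 0` and symmetry force the
two forms to agree at `u` and `w`, so `u = w = 0`.
-/

open Finset Module Module.End RCLike
open scoped InnerProductSpace

section InnerProductSpace

variable {𝕜 E : Type*} [RCLike 𝕜] [NormedAddCommGroup E] [InnerProductSpace 𝕜 E]

theorem LinearMap.re_inner_apply_le_of_le {f f' : E →ₗ[𝕜] E} (h : f ≤ f') (x : E) :
    re ⟪f x, x⟫_𝕜 ≤ re ⟪f' x, x⟫_𝕜 := by
  have := h.2 x
  rwa [sub_apply, inner_sub_left, map_sub, sub_nonneg] at this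

theorem LinearMap.IsSymmetric.re_inner_apply_self_eq_of_map_add_eq_zero {S : E →ₗ[𝕜] E}
    (hS : S.IsSymmetric) {u w : E} (h : S (u + w) = 0) : re ⟪S u, u⟫_𝕜 = re ⟪S w, w⟫_𝕜 := by
  have hSu : S u = -S w := by rw [map_add] at h; exact eq_neg_of_add_eq_zero_left h
  rw [hSu, inner_neg_left, hS, hSu, inner_neg_right, neg_neg, inner_re_symm]

theorem Orthonormal.re_inner_map_sum_smul {ι : Type*} {v : ι → E} (hv : Orthonormal 𝕜 v)
    {L : E →ₗ[𝕜] E} {m : ι → ℝ} (hL : ∀ i, L (v i) = (m i : 𝕜) • v i) (s : Finset ι)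
    (c : ι → 𝕜) :
    re ⟪L (∑ i ∈ s, c i • v i), ∑ i ∈ s, c i • v i⟫_𝕜 = ∑ i ∈ s, m i * ‖c i‖ ^ 2 := by
  have hLsum : L (∑ i ∈ s, c i • v i) = ∑ i ∈ s, (m i * c i) • v i := by
    simp only [map_sum, map_smul, hL, smul_smul, mul_comm]
  rw [hLsum, hv.inner_sum, map_sum]
  refine sum_congr rfl fun i _ => ?_
  rw [map_mul (starRingEnd 𝕜), conj_ofReal, mul_assoc, RCLike.conj_mul, ← ofReal_pow,
    ← ofReal_mul, ofReal_re]

namespace LinearMap.IsSymmetric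

variable [FiniteDimensional 𝕜 E] {T : E →ₗ[𝕜] E} (hT : T.IsSymmetric) {n : ℕ}
  (hn : finrank 𝕜 E = n)

theorem add_smul_one_apply_eigenvectorBasis (a : ℝ) (i : Fin n) :
    (T + (a : 𝕜) • 1) (hT.eigenvectorBasis hn i) =
      ((hT.eigenvalues hn i + a : ℝ) : 𝕜) • hT.eigenvectorBasis hn i := by
  simp [add_smul]

theorem re_inner_apply_sum_eigenvectorBasis_le {L : E →ₗ[𝕜] E} {a : ℝ}
    (hL : L ≤ T + (a : 𝕜) • 1) (s : Finset (Fin n)) (c : Fin n → 𝕜) :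
    re ⟪L (∑ i ∈ s, c i • hT.eigenvectorBasis hn i), ∑ i ∈ s, c i • hT.eigenvectorBasis hn i⟫_𝕜
      ≤ ∑ i ∈ s, (hT.eigenvalues hn i + a) * ‖c i‖ ^ 2 :=
  (re_inner_apply_le_of_le hL _).trans_eq <|
    (hT.eigenvectorBasis hn).orthonormal.re_inner_map_sum_smul
      (hT.add_smul_one_apply_eigenvectorBasis hn a) s c

theorem le_re_inner_apply_sum_eigenvectorBasis {L : E →ₗ[𝕜] E} {a : ℝ}
    (hL : T + (a : 𝕜) • 1 ≤ L) (s : Finset (Fin n)) (c : Fin n → 𝕜) :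
    ∑ i ∈ s, (hT.eigenvalues hn i + a) * ‖c i‖ ^ 2 ≤
      re ⟪L (∑ i ∈ s, c i • hT.eigenvectorBasis hn i), ∑ i ∈ s, c i • hT.eigenvectorBasis hn i⟫_𝕜 :=
  ((hT.eigenvectorBasis hn).orthonormal.re_inner_map_sum_smul
      (hT.add_smul_one_apply_eigenvectorBasis hn a) s c).symm.trans_le <|
    re_inner_apply_le_of_le hL _

/-- Both sides bound `re ⟪(S - μ) u, u⟫ = re ⟪(S - μ) w, w⟫`, where `v = u + w` is split along
the eigenvectors indexed by `s` and by `sᶜ`. -/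
theorem sum_compl_mul_norm_sq_repr_le {S : E →ₗ[𝕜] E} {g : ℝ} (hTS : T ≤ S)
    (hST : S ≤ T + (g : 𝕜) • 1) {μ : ℝ} {v : E} (hv : S v = (μ : 𝕜) • v) (s : Finset (Fin n)) :
    ∑ i ∈ sᶜ, (hT.eigenvalues hn i + -μ) * ‖(hT.eigenvectorBasis hn).repr v i‖ ^ 2 ≤
      ∑ i ∈ s, (hT.eigenvalues hn i + (g - μ)) * ‖(hT.eigenvectorBasis hn).repr v i‖ ^ 2 := by
  set b := hT.eigenvectorBasis hn
  set c := b.repr v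
  set S' := S - (μ : 𝕜) • 1
  have hS' : S'.IsSymmetric := by
    simpa using (hT.add hTS.1).sub (IsSymmetric.one.smul (conj_ofReal μ))
  have hS'v : S' (∑ i ∈ s, c i • b i + ∑ i ∈ sᶜ, c i • b i) = 0 := by
    rw [sum_add_sum_compl, b.sum_repr]
    simp [S', hv]
  have hu := hT.re_inner_apply_sum_eigenvectorBasis_le hn (L := S') (a := g - μ)
    (by calc S' ≤ T + (g : 𝕜) • 1 - (μ : 𝕜) • 1 := sub_le_sub_right hST _
          _ = T + ((g - μ : ℝ) : 𝕜) • 1 := by push_cast; module) s c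
  have hw := hT.le_re_inner_apply_sum_eigenvectorBasis hn (L := S') (a := -μ)
    (by calc T + ((-μ : ℝ) : 𝕜) • 1 = T - (μ : 𝕜) • 1 := by push_cast; module
          _ ≤ S' := sub_le_sub_right hTS _) sᶜ c
  rw [hS'.re_inner_apply_self_eq_of_map_add_eq_zero hS'v] at hu
  exact hw.trans hu

theorem exists_eigenvalues_le_le_add {S : E →ₗ[𝕜] E} {g : ℝ} (hTS : T ≤ S)
    (hST : S ≤ T + (g : 𝕜) • 1) {μ : ℝ} (hμ : HasEigenvalue S μ) :
    ∃ i, hT.eigenvalues hn i ≤ μ ∧ μ ≤ hT.eigenvalues hn i + g := by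
  by_contra! hgap
  obtain ⟨v, hv⟩ := hμ.exists_hasEigenvector
  set lam := hT.eigenvalues hn
  set c := (hT.eigenvectorBasis hn).repr v
  set s := univ.filter fun i => lam i ≤ μ
  have hle := hT.sum_compl_mul_norm_sq_repr_le hn hTS hST hv.apply_eq_smul s
  have hlow : ∀ i ∈ s, lam i + (g - μ) < 0 := fun i hi => by
    linarith [hgap i (mem_filter.mp hi).2]
  have hhigh : ∀ i ∈ sᶜ, 0 < lam i + -μ := fun i hi => by
    simp only [s, compl_filter, mem_filter, not_le] at hi
    linarith [hi.2]
  obtain ⟨j, hj⟩ : ∃ j, c j ≠ 0 := by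
    by_contra! hc
    exact hv.2 ((hT.eigenvectorBasis hn).repr.map_eq_zero_iff.mp (by ext i; exact hc i))
  by_cases hjs : j ∈ s
  · have : ∑ i ∈ s, (lam i + (g - μ)) * ‖c i‖ ^ 2 < 0 :=
      sum_neg' (fun i hi => mul_nonpos_of_nonpos_of_nonneg (hlow i hi).le (by positivity))
        ⟨j, hjs, mul_neg_of_neg_of_pos (hlow j hjs) (by positivity)⟩
    have : 0 ≤ ∑ i ∈ sᶜ, (lam i + -μ) * ‖c i‖ ^ 2 :=
      sum_nonneg fun i hi => mul_nonneg (hhigh i hi).le (by positivity)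
    linarith
  · have : ∑ i ∈ s, (lam i + (g - μ)) * ‖c i‖ ^ 2 ≤ 0 :=
      sum_nonpos fun i hi => mul_nonpos_of_nonpos_of_nonneg (hlow i hi).le (by positivity)
    have : 0 < ∑ i ∈ sᶜ, (lam i + -μ) * ‖c i‖ ^ 2 :=
      sum_pos' (fun i hi => mul_nonneg (hhigh i hi).le (by positivity))
        ⟨j, mem_compl.mpr hjs, mul_pos (hhigh j (mem_compl.mpr hjs)) (by positivity)⟩
    linarith

end LinearMap.IsSymmetric

end InnerProductSpace

section MatrixOrder

open scoped MatrixOrder ComplexOrder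

variable {𝕜 n : Type*} [RCLike 𝕜] [DecidableEq n]

theorem Matrix.diagonal_ofReal_le_diagonal_ofReal {d d' : n → ℝ} (h : d ≤ d') :
    diagonal (fun i => (d i : 𝕜)) ≤ diagonal (fun i => (d' i : 𝕜)) := by
  rw [le_iff, diagonal_sub, posSemidef_diagonal_iff]
  intro i
  simpa only [Pi.sub_apply, ← ofReal_sub, ofReal_nonneg, sub_nonneg] using h i

variable [Fintype n]

theorem Matrix.toEuclideanLin_mono {A B : Matrix n n 𝕜} (h : A ≤ B) :
    toEuclideanLin A ≤ toEuclideanLin B := by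
  rw [LinearMap.le_def, ← map_sub, isPositive_toEuclideanLin_iff]
  exact h

theorem Matrix.IsHermitian.exists_eigenvalues_le_le_add {A B : Matrix n n 𝕜}
    (hA : A.IsHermitian) {g : ℝ} (hAB : A ≤ B) (hBA : B ≤ A + (g : 𝕜) • 1) {μ : ℝ}
    {v : n → 𝕜} (hv : v ≠ 0) (hBv : B *ᵥ v = (μ : 𝕜) • v) :
    ∃ i, hA.eigenvalues i ≤ μ ∧ μ ≤ hA.eigenvalues i + g := by
  have hμ : HasEigenvalue (toEuclideanLin B) μ := by
    refine hasEigenvalue_of_hasEigenvector (x := WithLp.toLp 2 v) ⟨?_, by simpa using hv⟩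
    rw [mem_eigenspace_iff, toLpLin_toLp, toLin'_apply, hBv, WithLp.toLp_smul]
  have hBA' : toEuclideanLin B ≤ toEuclideanLin A + (g : 𝕜) • 1 := by
    have h := toEuclideanLin_mono hBA
    rwa [map_add, map_smul, toLpLin_one] at h
  obtain ⟨j, hj⟩ := (isSymmetric_toEuclideanLin_iff.mpr hA).exists_eigenvalues_le_le_add
    finrank_euclideanSpace (toEuclideanLin_mono hAB) hBA' hμ
  refine ⟨Fintype.equivOfCardEq (Fintype.card_fin _) j, ?_⟩
  simpa [Matrix.IsHermitian.eigenvalues, Matrix.IsHermitian.eigenvalues₀] using hj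

end MatrixOrder

section NLS

open scoped MatrixOrder ComplexOrder

variable {N : ℕ} {t g : ℝ} {V : Fin N → ℝ} {ψ : Fin N → ℂ} {E : ℝ}

theorem periodicH_mulVec (i : Fin N) :
    (periodicH N t V *ᵥ ψ) i = t * ψ (pSucc i) + t * ψ (pPred i) + V i * ψ i := by
  simp only [periodicH, mulVec, dotProduct, of_apply, add_mul, ite_mul, zero_mul, sum_add_distrib,
    sum_ite_eq', mem_univ, if_true]

theorem Normalized.ne_zero (hψ : Normalized ψ) : ψ ≠ 0 := by
  rintro rfl
  simp [Normalized] at hψ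

theorem Normalized.norm_sq_le_one (hψ : Normalized ψ) (i : Fin N) : ‖ψ i‖ ^ 2 ≤ 1 :=
  hψ ▸ single_le_sum (f := fun j => ‖ψ j‖ ^ 2) (fun j _ => by positivity) (mem_univ i)

theorem PeriodicNLS.mulVec_eq (hsol : PeriodicNLS N t g V ψ E) :
    (periodicH N t V + diagonal fun i => ((g * ‖ψ i‖ ^ 2 : ℝ) : ℂ)) *ᵥ ψ = (E : ℂ) • ψ := by
  ext i
  rw [add_mulVec, Pi.add_apply, periodicH_mulVec, mulVec_diagonal, Pi.smul_apply, smul_eq_mul,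
    ← hsol i]
  push_cast
  ring

theorem PeriodicNLS.exists_eigenvalues_le_le_add (hsol : PeriodicNLS N t g V ψ E)
    (hH : (periodicH N t V).IsHermitian) (hg : 0 ≤ g) (hψ : Normalized ψ) :
    ∃ i, hH.eigenvalues i ≤ E ∧ E ≤ hH.eigenvalues i + g := by
  have hD₀ : 0 ≤ diagonal fun i => ((g * ‖ψ i‖ ^ 2 : ℝ) : ℂ) := by
    simpa using diagonal_ofReal_le_diagonal_ofReal (𝕜 := ℂ) (d := 0)
      (fun i => by positivity : (0 : Fin N → ℝ) ≤ fun i => g * ‖ψ i‖ ^ 2)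
  have hDg : (diagonal fun i => ((g * ‖ψ i‖ ^ 2 : ℝ) : ℂ)) ≤ (g : ℂ) • 1 := by
    rw [smul_one_eq_diagonal]
    exact diagonal_ofReal_le_diagonal_ofReal (d' := fun _ => g)
      (fun i => mul_le_of_le_one_right hg (hψ.norm_sq_le_one i))
  exact hH.exists_eigenvalues_le_le_add (le_add_of_nonneg_right hD₀) (add_le_add le_rfl hDg)
    hψ.ne_zero hsol.mulVec_eq

end NLS

theorem stmt_0_general (N : ℕ) (t : ℝ) (g : ℝ) (hg : 0 < g) (V : Fin N → ℝ)
    (hH : (periodicH N t V).IsHermitian) (e : Fin N → ℝ)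
    (he : IsSortedEigenvalues hH e)
    (ψ : Fin N → ℂ) (hnorm : Normalized ψ) (E : ℝ)
    (hsol : PeriodicNLS N t g V ψ E) :
    ∃ n : Fin N, e n ≤ E ∧ E ≤ e n + g := by
  obtain ⟨-, σ, hσ⟩ := he
  obtain ⟨i, hi⟩ := hsol.exists_eigenvalues_le_le_add hH hg.le hnorm
  exact ⟨σ.symm i, by simpa [hσ] using hi⟩

/-- Theorem 1 of the paper, periodic boundary conditions:
a normalized solution of the nonlinear Schrödinger equation with periodic boundary
conditions has eigenenergy `E` with `E_n ≤ E ≤ E_n + g` for some `n`, i.e. `E`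
does not lie in the forbidden region `Γ`. -/
theorem stmt_0 (N : ℕ) (hN : 3 ≤ N) (t : ℝ) (g : ℝ) (hg : 0 < g) (V : Fin N → ℝ)
    (hH : (periodicH N t V).IsHermitian) (e : Fin N → ℝ)
    (he : IsSortedEigenvalues hH e)
    (ψ : Fin N → ℂ) (hnorm : Normalized ψ) (E : ℝ)
    (hsol : PeriodicNLS N t g V ψ E) :
    ∃ n : Fin N, e n ≤ E ∧ E ≤ e n + g :=
  stmt_0_general N t g hg V hH e he ψ hnorm E hsol
end
end

section
/- Let N ≥ 3 be an integer, t a real number, g > 0, and V : {1,…,N} → ℝ a real on-site potential. Let E_1^D ≤ … ≤ E_N^D be the eigenvalues, listed in nondecreasing order, of the linear Hamiltonian H_0^D with Dirichlet boundary conditions. Suppose ψ ∈ ℂ^N with ∑_{i=1}^N |ψ_i|² = 1 satisfies the stationary nonlinear Schrödinger equation t(ψ_{i+1} + ψ_{i−1}) + V_i ψ_i + g|ψ_i|²ψ_i = Eψ_i for all i = 1,…,N with the convention ψ_0 = ψ_{N+1} = 0, for some real E. Then there exists n ∈ {1,…,N} with E_n^D ≤ E ≤ E_n^D + g. -/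
open Matrix Filter

noncomputable section

/-!
Since `g |ψ_i|² ψ_i = (g |ψ_i|²) ψ_i`, a solution `ψ` is an eigenvector with eigenvalue `E` of the
Hermitian matrix `B = H_0^D + g · diag |ψ_i|²`, so `E = E_n(B)` for some `n`. Normalization puts
the weights `|ψ_i|²` in `[0, 1]`, hence `H_0^D ≤ B ≤ H_0^D + g` as quadratic forms, and Weyl's
inequality gives `E_n^D ≤ E_n(B) ≤ E_n^D + g`. Weyl's inequality follows from the min-max argument:
the span of the first `k + 1` eigenvectors of one operator meets the span of the last `N - k`
eigenvectors of the other in a nonzero vector, on which the two Rayleigh quotients are compared.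
-/

open Module Submodule RCLike

section Rayleigh

variable {𝕜 E ι : Type*} [RCLike 𝕜] [NormedAddCommGroup E] [InnerProductSpace 𝕜 E] [Fintype ι]
  {u : ι → E} {T : E →ₗ[𝕜] E} {μ : ι → ℝ}

theorem Orthonormal.re_inner_map_sum_smul_s1 (hu : Orthonormal 𝕜 u)
    (hT : ∀ i, T (u i) = (μ i : 𝕜) • u i) (l : ι → 𝕜) :
    re (inner 𝕜 (∑ i, l i • u i) (T (∑ i, l i • u i))) = ∑ i, μ i * ‖l i‖ ^ 2 := by
  have hTl : T (∑ i, l i • u i) = ∑ i, ((μ i : 𝕜) * l i) • u i := by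
    simp only [map_sum, map_smul, hT, smul_smul, mul_comm]
  rw [hTl, hu.inner_sum, map_sum]
  refine Finset.sum_congr rfl fun i _ => ?_
  rw [mul_left_comm, RCLike.conj_mul, ← ofReal_pow, ← ofReal_mul, ofReal_re]

theorem Orthonormal.norm_sum_smul_sq (hu : Orthonormal 𝕜 u) (l : ι → 𝕜) :
    ‖∑ i, l i • u i‖ ^ 2 = ∑ i, ‖l i‖ ^ 2 := by
  simpa [← inner_self_eq_norm_sq] using
    hu.re_inner_map_sum_smul_s1 (T := LinearMap.id) (μ := 1) (by simp) l

theorem Orthonormal.re_inner_map_le_of_mem_span (hu : Orthonormal 𝕜 u)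
    (hT : ∀ i, T (u i) = (μ i : 𝕜) • u i) {c : ℝ} (hc : ∀ i, μ i ≤ c) {x : E}
    (hx : x ∈ span 𝕜 (Set.range u)) :
    re (inner 𝕜 x (T x)) ≤ c * ‖x‖ ^ 2 := by
  obtain ⟨l, rfl⟩ := (mem_span_range_iff_exists_fun 𝕜).mp hx
  rw [hu.re_inner_map_sum_smul_s1 hT, hu.norm_sum_smul_sq, Finset.mul_sum]
  gcongr with i
  exact hc i

theorem Orthonormal.le_re_inner_map_of_mem_span (hu : Orthonormal 𝕜 u)
    (hT : ∀ i, T (u i) = (μ i : 𝕜) • u i) {c : ℝ} (hc : ∀ i, c ≤ μ i) {x : E}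
    (hx : x ∈ span 𝕜 (Set.range u)) :
    c * ‖x‖ ^ 2 ≤ re (inner 𝕜 x (T x)) := by
  obtain ⟨l, rfl⟩ := (mem_span_range_iff_exists_fun 𝕜).mp hx
  rw [hu.re_inner_map_sum_smul_s1 hT, hu.norm_sum_smul_sq, Finset.mul_sum]
  gcongr with i
  exact hc i

end Rayleigh

theorem exists_ne_zero_mem_span_le_mem_span_ge {K V : Type*} [Field K] [AddCommGroup V]
    [Module K V] [FiniteDimensional K V] {n : ℕ} (hn : finrank K V = n) {v w : Fin n → V}
    (hv : LinearIndependent K v) (hw : LinearIndependent K w) (k : Fin n) :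
    ∃ x ≠ 0, x ∈ span K (Set.range fun j : {j // j ≤ k} => v j) ∧
      x ∈ span K (Set.range fun j : {j // k ≤ j} => w j) := by
  have hcard_le : Fintype.card {j // j ≤ k} = k + 1 := by
    simp [Fintype.card_subtype, Finset.filter_ge_eq_Iic]
  have hcard_ge : Fintype.card {j // k ≤ j} = n - k := by
    simp [Fintype.card_subtype, Finset.filter_le_eq_Ici]
  have hdisj : ¬ Disjoint (span K (Set.range fun j : {j // j ≤ k} => v j))
      (span K (Set.range fun j : {j // k ≤ j} => w j)) := fun h => by
    have := finrank_add_finrank_le_of_disjoint h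
    rw [finrank_span_eq_card (b := fun j : {j // j ≤ k} => v j) (hv.comp _ Subtype.val_injective),
      finrank_span_eq_card (b := fun j : {j // k ≤ j} => w j) (hw.comp _ Subtype.val_injective),
      hcard_le, hcard_ge, hn] at this
    omega
  obtain ⟨x, hxv, hxw, hx0⟩ : ∃ x : V, _ ∧ _ ∧ x ≠ 0 := by simpa [disjoint_def] using hdisj
  exact ⟨x, hx0, hxv, hxw⟩

theorem eigenvalue_le_add_of_re_inner_le {𝕜 E : Type*} [RCLike 𝕜] [NormedAddCommGroup E]
    [InnerProductSpace 𝕜 E] [FiniteDimensional 𝕜 E] {n : ℕ} (hn : finrank 𝕜 E = n)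
    {A B : E →ₗ[𝕜] E} {v w : Fin n → E} {e f : Fin n → ℝ}
    (hv : Orthonormal 𝕜 v) (hAv : ∀ j, A (v j) = (e j : 𝕜) • v j) (he : Monotone e)
    (hw : Orthonormal 𝕜 w) (hBw : ∀ j, B (w j) = (f j : 𝕜) • w j) (hf : Monotone f) {c : ℝ}
    (hAB : ∀ x, re (inner 𝕜 x (B x)) ≤ re (inner 𝕜 x (A x)) + c * ‖x‖ ^ 2) (k : Fin n) :
    f k ≤ e k + c := by
  obtain ⟨x, hx0, hxv, hxw⟩ :=
    exists_ne_zero_mem_span_le_mem_span_ge hn hv.linearIndependent hw.linearIndependent k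
  have hA := (hv.comp _ Subtype.val_injective).re_inner_map_le_of_mem_span
    (fun j => hAv j) (fun j => he j.2) hxv
  have hB := (hw.comp _ Subtype.val_injective).le_re_inner_map_of_mem_span
    (fun j => hBw j) (fun j => hf j.2) hxw
  have hx : 0 < ‖x‖ ^ 2 := by positivity
  refine le_of_mul_le_mul_right ?_ hx
  linarith [hAB x]

section SortedEigenvalues

variable {N : ℕ} {A : Matrix (Fin N) (Fin N) ℂ} {hA : A.IsHermitian} {e : Fin N → ℝ}

theorem Matrix.IsHermitian.exists_isSortedEigenvalues (hA : A.IsHermitian) :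
    ∃ e, IsSortedEigenvalues hA e :=
  ⟨_, Tuple.monotone_sort hA.eigenvalues, Tuple.sort hA.eigenvalues, fun _ => rfl⟩

theorem IsSortedEigenvalues.exists_orthonormal_eigenvectors (he : IsSortedEigenvalues hA e) :
    ∃ v : Fin N → EuclideanSpace ℂ (Fin N),
      Orthonormal ℂ v ∧ ∀ j, toEuclideanLin A (v j) = (e j : ℂ) • v j := by
  obtain ⟨-, σ, hσ⟩ := he
  refine ⟨fun j => hA.eigenvectorBasis (σ j), hA.eigenvectorBasis.orthonormal.comp σ σ.injective,
    fun j => ?_⟩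
  ext i
  simpa [hσ, Complex.real_smul] using congrFun (hA.mulVec_eigenvectorBasis (σ j)) i

theorem IsSortedEigenvalues.le_add_of_re_inner_le {B : Matrix (Fin N) (Fin N) ℂ}
    {hB : B.IsHermitian} {f : Fin N → ℝ} (he : IsSortedEigenvalues hA e)
    (hf : IsSortedEigenvalues hB f) {c : ℝ}
    (hAB : ∀ x : EuclideanSpace ℂ (Fin N), re (inner ℂ x (toEuclideanLin B x)) ≤
      re (inner ℂ x (toEuclideanLin A x)) + c * ‖x‖ ^ 2) (k : Fin N) :
    f k ≤ e k + c := by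
  obtain ⟨v, hv, hAv⟩ := he.exists_orthonormal_eigenvectors
  obtain ⟨w, hw, hBw⟩ := hf.exists_orthonormal_eigenvectors
  exact eigenvalue_le_add_of_re_inner_le finrank_euclideanSpace_fin hv hAv he.1 hw hBw hf.1 hAB k

theorem IsSortedEigenvalues.exists_eq_of_mulVec_eq_smul (he : IsSortedEigenvalues hA e)
    {ψ : Fin N → ℂ} (hψ : ψ ≠ 0) {E : ℝ} (hEψ : A *ᵥ ψ = (E : ℂ) • ψ) : ∃ k, e k = E := by
  have hE : (E : ℂ) ∈ spectrum ℂ A := by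
    rw [← Matrix.spectrum_toLin', ← Module.End.hasEigenvalue_iff_mem_spectrum]
    exact Module.End.hasEigenvalue_of_hasEigenvector
      ⟨Module.End.mem_eigenspace_iff.mpr (by simpa using hEψ), hψ⟩
  obtain ⟨j, hj⟩ : E ∈ Set.range hA.eigenvalues := by
    rw [← hA.spectrum_real_eq_range_eigenvalues, ← spectrum.algebraMap_mem_iff ℂ]
    exact hE
  obtain ⟨-, σ, hσ⟩ := he
  exact ⟨σ.symm j, by simp [hσ, hj]⟩

end SortedEigenvalues

theorem Fin.sum_ite_val_eq_mul {R : Type*} [NonUnitalNonAssocSemiring R] {N : ℕ} (m : ℕ) (a : R)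
    (ψ : Fin N → R) :
    ∑ j : Fin N, (if m = j.1 then a else 0) * ψ j = a * if h : m < N then ψ ⟨m, h⟩ else 0 := by
  split_ifs with h
  · rw [Finset.sum_eq_single ⟨m, h⟩ (fun j _ hj => by simp [Ne.symm (Fin.val_ne_of_ne hj)])
      (by simp)]
    simp
  · simp only [mul_zero]
    exact Finset.sum_eq_zero fun j _ => by simp [show m ≠ j.1 by omega]

theorem dirichletH_mulVec {N : ℕ} (t : ℝ) (V : Fin N → ℝ) (ψ : Fin N → ℂ) (i : Fin N) :
    (dirichletH N t V *ᵥ ψ) i = (t : ℂ) * dNbr ψ i + (V i : ℂ) * ψ i := by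
  have hpred : ∑ j : Fin N, (if j.1 + 1 = i.1 then (t : ℂ) else 0) * ψ j =
      (t : ℂ) * if 0 < i.1 then ψ ⟨i.1 - 1, by omega⟩ else 0 := by
    split_ifs with hi
    · simp only [show ∀ j : Fin N, (j.1 + 1 = i.1) = (i.1 - 1 = j.1) from fun j => propext (by omega),
        Fin.sum_ite_val_eq_mul, dif_pos (show i.1 - 1 < N by omega)]
    · simp only [mul_zero]
      exact Finset.sum_eq_zero fun j _ => by simp [show j.1 + 1 ≠ i.1 by omega]
  simp only [dirichletH, dNbr, mulVec, dotProduct, of_apply, add_mul, Finset.sum_add_distrib]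
  rw [Fin.sum_ite_val_eq_mul, hpred, mul_add]
  simp

theorem re_inner_toEuclideanLin_add_diagonal {𝕜 n : Type*} [RCLike 𝕜] [Fintype n] [DecidableEq n]
    (A : Matrix n n 𝕜) (d : n → ℝ) (x : EuclideanSpace 𝕜 n) :
    re (inner 𝕜 x (toEuclideanLin (A + diagonal fun i => (d i : 𝕜)) x)) =
      re (inner 𝕜 x (toEuclideanLin A x)) + ∑ i, d i * ‖x i‖ ^ 2 := by
  rw [map_add, LinearMap.add_apply, inner_add_right, map_add, add_right_inj, PiLp.inner_apply,
    map_sum]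
  refine Finset.sum_congr rfl fun i _ => ?_
  simp [mulVec_diagonal, RCLike.inner_apply, RCLike.norm_sq_eq_def]
  ring

theorem stmt_1_general (N : ℕ) (t : ℝ) (g : ℝ) (hg : 0 < g) (V : Fin N → ℝ)
    (hH : (dirichletH N t V).IsHermitian) (e : Fin N → ℝ)
    (he : IsSortedEigenvalues hH e)
    (ψ : Fin N → ℂ) (hnorm : Normalized ψ) (E : ℝ)
    (hsol : DirichletNLS N t g V ψ E) :
    ∃ n : Fin N, e n ≤ E ∧ E ≤ e n + g := by
  set d : Fin N → ℝ := fun i => g * ‖ψ i‖ ^ 2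
  have hd : ∀ i, 0 ≤ d i ∧ d i ≤ g := fun i => ⟨by positivity, mul_le_of_le_one_right hg.le
    (hnorm ▸ Finset.single_le_sum (fun j _ => sq_nonneg ‖ψ j‖) (Finset.mem_univ i))⟩
  set B := dirichletH N t V + diagonal fun i => (d i : ℂ)
  have hB : B.IsHermitian := hH.add (isHermitian_diagonal_of_self_adjoint _ (by ext; simp))
  have hBψ : B *ᵥ ψ = (E : ℂ) • ψ := by
    ext i
    simp only [B, d, add_mulVec, Pi.add_apply, dirichletH_mulVec, mulVec_diagonal, Pi.smul_apply,
      smul_eq_mul]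
    push_cast
    linear_combination hsol i
  have hψ : ψ ≠ 0 := by rintro rfl; simp [Normalized] at hnorm
  obtain ⟨f, hf⟩ := hB.exists_isSortedEigenvalues
  obtain ⟨n, rfl⟩ := hf.exists_eq_of_mulVec_eq_smul hψ hBψ
  have hq : ∀ x, re (inner ℂ x (toEuclideanLin B x)) =
      re (inner ℂ x (toEuclideanLin (dirichletH N t V) x)) + ∑ i, d i * ‖x i‖ ^ 2 :=
    re_inner_toEuclideanLin_add_diagonal _ _
  refine ⟨n, le_of_le_of_eq (hf.le_add_of_re_inner_le he (c := 0) (fun x => ?_) n) (add_zero _),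
    he.le_add_of_re_inner_le hf (fun x => ?_) n⟩
  · rw [hq, zero_mul, add_zero, le_add_iff_nonneg_right]
    exact Finset.sum_nonneg fun i _ => mul_nonneg (hd i).1 (sq_nonneg _)
  · rw [hq, EuclideanSpace.norm_sq_eq, Finset.mul_sum]
    gcongr with i
    exact (hd i).2

/-- Theorem 1 of the paper, Dirichlet boundary conditions:
a normalized solution of the nonlinear Schrödinger equation with Dirichlet boundary
conditions has eigenenergy `E` with `E_n^D ≤ E ≤ E_n^D + g` for some `n`. -/
theorem stmt_1 (N : ℕ) (hN : 3 ≤ N) (t : ℝ) (g : ℝ) (hg : 0 < g) (V : Fin N → ℝ)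
    (hH : (dirichletH N t V).IsHermitian) (e : Fin N → ℝ)
    (he : IsSortedEigenvalues hH e)
    (ψ : Fin N → ℂ) (hnorm : Normalized ψ) (E : ℝ)
    (hsol : DirichletNLS N t g V ψ E) :
    ∃ n : Fin N, e n ≤ E ∧ E ≤ e n + g :=
  stmt_1_general N t g hg V hH e he ψ hnorm E hsol
end
end

section
/- Let N ≥ 3 be an integer, t, g real numbers, and V : {1,…,N} → ℝ. Suppose ψ ∈ ℂ^N with ∑_{i=1}^N |ψ_i|² = 1 satisfies t(ψ_{i+1} + ψ_{i−1}) + V_i ψ_i + g|ψ_i|²ψ_i = Eψ_i for all i = 1,…,N with the Dirichlet convention ψ_0 = ψ_{N+1} = 0, for some real E. Let σ(H_0^P) be the spectrum of the linear Hamiltonian with periodic boundary conditions and set U_max = max_{1 ≤ i ≤ N} |ψ_i|². Then dist(E, σ(H_0^P)) ≤ |g|·U_max + |t|·√(|ψ_1|² + |ψ_N|²). -/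
/-!
For a Hermitian matrix `H` and a unit vector `ψ`, expanding `ψ` in an orthonormal eigenbasis gives
`dist(E, σ(H)) ≤ ‖(H - E) ψ‖`. For `H = H_0^P` and a Dirichlet solution `ψ`, the residual
`(H_0^P - E) ψ` is the nonlinear term `-g |ψ_i|² ψ_i`, of norm at most `|g| U_max`, plus the two
couplings `t ψ_1 e_N + t ψ_N e_1` that the periodic wrap-around adds, of norm
`|t| √(|ψ_1|² + |ψ_N|²)`.
-/

open Matrix Filter

noncomputable section

theorem LinearMap.IsSymmetric.infDist_eigenvalues_mul_norm_le {𝕜 E : Type*} [RCLike 𝕜]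
    [NormedAddCommGroup E] [InnerProductSpace 𝕜 E] [FiniteDimensional 𝕜 E] {T : E →ₗ[𝕜] E}
    (hT : T.IsSymmetric) {n : ℕ} (hn : Module.finrank 𝕜 E = n) (μ : ℝ) (v : E) :
    Metric.infDist μ (Set.range (hT.eigenvalues hn)) * ‖v‖ ≤ ‖T v - (μ : 𝕜) • v‖ := by
  let b := hT.eigenvectorBasis hn
  have hrepr (i : Fin n) :
      b.repr (T v - (μ : 𝕜) • v) i = ((hT.eigenvalues hn i - μ : ℝ) : 𝕜) * b.repr v i := by
    simp only [b, map_sub, map_smul, PiLp.sub_apply, PiLp.smul_apply, smul_eq_mul,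
      hT.eigenvectorBasis_apply_self_apply]
    ring
  set d := Metric.infDist μ (Set.range (hT.eigenvalues hn))
  have hd : 0 ≤ d := Metric.infDist_nonneg
  have hdist (i : Fin n) : d ≤ |hT.eigenvalues hn i - μ| := by
    simpa [Real.dist_eq, abs_sub_comm] using
      Metric.infDist_le_dist_of_mem (x := μ) (Set.mem_range_self i)
  have hsq : (d * ‖v‖) ^ 2 ≤ ‖T v - (μ : 𝕜) • v‖ ^ 2 := by
    rw [← b.repr.norm_map v, ← b.repr.norm_map, mul_pow, EuclideanSpace.norm_sq_eq,
      EuclideanSpace.norm_sq_eq, Finset.mul_sum]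
    gcongr with i
    rw [hrepr, norm_mul, mul_pow, RCLike.norm_ofReal]
    gcongr
    exact hdist i
  exact (pow_le_pow_iff_left₀ (by positivity) (norm_nonneg _) two_ne_zero).mp hsq

theorem Matrix.IsHermitian.infDist_eigenvalues_mul_norm_le {𝕜 n : Type*} [RCLike 𝕜] [Fintype n]
    [DecidableEq n] {A : Matrix n n 𝕜} (hA : A.IsHermitian) (μ : ℝ) (x : n → 𝕜) :
    Metric.infDist μ (Set.range hA.eigenvalues) * ‖WithLp.toLp 2 x‖ ≤
      ‖WithLp.toLp 2 (A *ᵥ x - (μ : 𝕜) • x)‖ := by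
  have hrange : Set.range hA.eigenvalues = Set.range hA.eigenvalues₀ :=
    (Fintype.equivOfCardEq (Fintype.card_fin _)).symm.surjective.range_comp _
  rw [hrange]
  exact (isSymmetric_toEuclideanLin_iff.mpr hA).infDist_eigenvalues_mul_norm_le _ μ _

namespace EuclideanSpace

variable {𝕜 ι : Type*} [RCLike 𝕜] [Fintype ι]

theorem norm_toLp_le_of_forall_norm_le {u x : ι → 𝕜} {c : ℝ} (hc : 0 ≤ c)
    (h : ∀ i, ‖u i‖ ≤ c * ‖x i‖) :
    ‖WithLp.toLp 2 u‖ ≤ c * ‖WithLp.toLp 2 x‖ := by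
  rw [norm_eq, norm_eq, ← Real.sqrt_sq hc, ← Real.sqrt_mul (sq_nonneg c), Finset.mul_sum]
  gcongr with i
  simpa [mul_pow] using pow_le_pow_left₀ (norm_nonneg _) (h i) 2

theorem norm_toLp_single_add_single [DecidableEq ι] {i j : ι} (hij : i ≠ j) (a b : 𝕜) :
    ‖WithLp.toLp 2 (Pi.single i a + Pi.single j b : ι → 𝕜)‖ = √(‖a‖ ^ 2 + ‖b‖ ^ 2) := by
  have h (k : ι) : ‖(Pi.single i a + Pi.single j b : ι → 𝕜) k‖ ^ 2 =
      (if k = i then ‖a‖ ^ 2 else 0) + (if k = j then ‖b‖ ^ 2 else 0) := by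
    by_cases hi : k = i <;> by_cases hj : k = j
    · exact absurd (hi.symm.trans hj) hij
    all_goals simp [hi, hj, hij, hij.symm]
  rw [norm_eq]
  simp only [h, Finset.sum_add_distrib, Finset.sum_ite_eq', Finset.mem_univ, if_true]

end EuclideanSpace

theorem val_pSucc {N : ℕ} (i : Fin N) : (pSucc i).1 = if i.1 = N - 1 then 0 else i.1 + 1 := by
  have := i.isLt
  split_ifs with h
  · simp [pSucc, h, Nat.sub_add_cancel (by omega : 1 ≤ N)]
  · exact Nat.mod_eq_of_lt (by omega)

theorem val_pPred {N : ℕ} (i : Fin N) : (pPred i).1 = if i.1 = 0 then N - 1 else i.1 - 1 := by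
  have := i.isLt
  show (i.1 + (N - 1)) % N = _
  split_ifs with h
  · simp [h]
  · rw [show i.1 + (N - 1) = i.1 - 1 + N by omega, Nat.add_mod_right]
    exact Nat.mod_eq_of_lt (by omega)

theorem apply_pSucc_add_apply_pPred_sub_dNbr {N : ℕ} (hN : 0 < N) (ψ : Fin N → ℂ) (i : Fin N) :
    ψ (pSucc i) + ψ (pPred i) - dNbr ψ i =
      (Pi.single ⟨N - 1, by omega⟩ (ψ ⟨0, hN⟩) + Pi.single ⟨0, hN⟩ (ψ ⟨N - 1, by omega⟩) :
        Fin N → ℂ) i := by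
  -- Reading ψ through `φ : ℕ → ℂ` moves all index arithmetic into `ℕ`, where `omega` handles it.
  obtain ⟨φ, hφ⟩ : ∃ φ : ℕ → ℂ, ∀ j, ψ j = φ j.1 :=
    ⟨fun k => if h : k < N then ψ ⟨k, h⟩ else 0, fun j => by simp⟩
  have := i.isLt
  simp only [hφ, val_pSucc, val_pPred, dNbr, Pi.add_apply, Pi.single_apply, Fin.ext_iff]
  split_ifs <;> first | omega | simp_all

theorem periodicH_mulVec_apply (N : ℕ) (t : ℝ) (V : Fin N → ℝ) (ψ : Fin N → ℂ) (i : Fin N) :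
    (periodicH N t V *ᵥ ψ) i = t * (ψ (pSucc i) + ψ (pPred i)) + V i * ψ i := by
  simp [periodicH, mulVec, dotProduct, add_mul, mul_add, Finset.sum_add_distrib, ite_mul]

theorem DirichletNLS.periodicH_mulVec_sub_smul {N : ℕ} {t g : ℝ} {V : Fin N → ℝ}
    {ψ : Fin N → ℂ} {E : ℝ} (hsol : DirichletNLS N t g V ψ E) (hN : 0 < N) :
    periodicH N t V *ᵥ ψ - (E : ℂ) • ψ =
      (fun i => -((g : ℂ) * (‖ψ i‖ : ℂ) ^ 2 * ψ i)) +
        (t : ℂ) • (Pi.single ⟨N - 1, by omega⟩ (ψ ⟨0, hN⟩) +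
          Pi.single ⟨0, hN⟩ (ψ ⟨N - 1, by omega⟩)) := by
  funext i
  have hbdry := apply_pSucc_add_apply_pPred_sub_dNbr hN ψ i
  simp only [Pi.sub_apply, Pi.add_apply, Pi.smul_apply, smul_eq_mul, periodicH_mulVec_apply]
    at hbdry ⊢
  linear_combination hsol i + (t : ℂ) * hbdry

theorem Normalized.norm_toLp_eq_one {N : ℕ} {ψ : Fin N → ℂ} (h : Normalized ψ) :
    ‖WithLp.toLp 2 ψ‖ = 1 := by
  rw [EuclideanSpace.norm_eq, ← Real.sqrt_one, ← (h : ∑ i, ‖ψ i‖ ^ 2 = 1)]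

theorem norm_toLp_cubic_le {ι : Type*} [Fintype ι] (g : ℝ) (ψ : ι → ℂ) :
    ‖WithLp.toLp 2 fun i => -((g : ℂ) * (‖ψ i‖ : ℂ) ^ 2 * ψ i)‖ ≤
      |g| * (⨆ i, ‖ψ i‖ ^ 2) * ‖WithLp.toLp 2 ψ‖ := by
  have hU0 : 0 ≤ ⨆ i, ‖ψ i‖ ^ 2 := Real.iSup_nonneg fun i => sq_nonneg _
  refine EuclideanSpace.norm_toLp_le_of_forall_norm_le (by positivity) fun i => ?_
  rw [norm_neg, norm_mul, norm_mul, norm_pow, Complex.norm_real, Complex.norm_real,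
    Real.norm_eq_abs, norm_norm]
  gcongr
  exact le_ciSup (f := fun j => ‖ψ j‖ ^ 2) (Set.finite_range _).bddAbove i

/-- key estimate (13) of the paper: a normalized Dirichlet solution
with eigenenergy `E` satisfies
`dist(E, σ(H_0^P)) ≤ |g|·U_max + |t|·√(|ψ_1|² + |ψ_N|²)`. -/
theorem stmt_7 (N : ℕ) (hN : 3 ≤ N) (t g : ℝ) (V : Fin N → ℝ)
    (hH : (periodicH N t V).IsHermitian)
    (ψ : Fin N → ℂ) (hnorm : Normalized ψ) (E : ℝ)
    (hsol : DirichletNLS N t g V ψ E) :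
    Metric.infDist E (Set.range hH.eigenvalues) ≤
      |g| * (⨆ i : Fin N, ‖ψ i‖ ^ 2) +
        |t| * Real.sqrt (‖ψ ⟨0, by omega⟩‖ ^ 2 +
          ‖ψ ⟨N - 1, by omega⟩‖ ^ 2) := by
  have hψ := hnorm.norm_toLp_eq_one
  calc Metric.infDist E (Set.range hH.eigenvalues)
      = Metric.infDist E (Set.range hH.eigenvalues) * ‖WithLp.toLp 2 ψ‖ := by rw [hψ, mul_one]
    _ ≤ ‖WithLp.toLp 2 (periodicH N t V *ᵥ ψ - (E : ℂ) • ψ)‖ :=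
      hH.infDist_eigenvalues_mul_norm_le E ψ
    _ ≤ _ := by
      rw [hsol.periodicH_mulVec_sub_smul (by omega), WithLp.toLp_add, WithLp.toLp_smul]
      refine norm_add_le_of_le ((norm_toLp_cubic_le g ψ).trans_eq (by rw [hψ, mul_one])) ?_
      rw [norm_smul, Complex.norm_real, Real.norm_eq_abs,
        EuclideanSpace.norm_toLp_single_add_single (by simp [Fin.ext_iff]; omega)]
end
end
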